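/- arXiv:1506.00222 — 2 statements merged into one kernel-verified Lean document; each statement's English description precedes it below -/
import Mathlib

section
/- (Coarsening error identity) Let Q₁ ∈ R^{n₁×k}, Q₂ ∈ R^{n₂×k} be isometric, F₁, F₂ ∈ R^{k×k} with Q = [Q₁F₁; Q₂F₂] isometric, and let Q̂ = [F₁; F₂]. Let P̂ ∈ R^{2k×k'} be isometric with P̂* Q̂ = 0 and Q̂ Q̂* + P̂ P̂* = I. Then for any x = [Q₁ x̂₁; Q₂ x̂₂] with x̂₁, x̂₂ ∈ R^k, we have ‖x − Q Q* x‖ = ‖P̂* [x̂₁; x̂₂]‖. -/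
open Matrix

/-- Euclidean norm of a real vector indexed by a finite type. -/
noncomputable def vecEnorm {ι : Type*} [Fintype ι] (v : ι → ℝ) : ℝ :=
  Real.sqrt (∑ i, v i ^ 2)

/-!
Write `B` for the block-diagonal isometry `diag(Q₁, Q₂)` and `Q̂ = [F₁; F₂]`. Then `x = B x̂` and
`Q = B Q̂`, so `Bᵀ B = 1` gives `x - Q Qᵀ x = B (1 - Q̂ Q̂ᵀ) x̂ = B P̂ (P̂ᵀ x̂)`. Both `B` and `P̂`
are isometries, hence preserve the Euclidean norm, which leaves `‖P̂ᵀ x̂‖`.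
-/

lemma vecEnorm_eq_sqrt_dotProduct {ι : Type*} [Fintype ι] (v : ι → ℝ) :
    vecEnorm v = √(v ⬝ᵥ v) := by
  simp only [vecEnorm, dotProduct, sq]

lemma vecEnorm_mulVec_of_transpose_mul_self_eq_one {m n : Type*} [Fintype m] [Fintype n]
    [DecidableEq n] {M : Matrix m n ℝ} (hM : Mᵀ * M = 1) (v : n → ℝ) :
    vecEnorm (M *ᵥ v) = vecEnorm v := by
  have hdot : M *ᵥ v ⬝ᵥ M *ᵥ v = v ⬝ᵥ v := by
    rw [dotProduct_mulVec, vecMul_mulVec, ← mulVec_transpose, hM, transpose_one, one_mulVec]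
  rw [vecEnorm_eq_sqrt_dotProduct, vecEnorm_eq_sqrt_dotProduct, hdot]

section BlockDiagonal

variable {R : Type*} {m₁ m₂ n₁ n₂ : Type*}

lemma fromBlocks_transpose_mul_self_eq_one [CommSemiring R] [Fintype m₁] [Fintype m₂]
    [DecidableEq n₁] [DecidableEq n₂] {A : Matrix m₁ n₁ R} {D : Matrix m₂ n₂ R}
    (hA : Aᵀ * A = 1) (hD : Dᵀ * D = 1) :
    (fromBlocks A 0 0 D)ᵀ * fromBlocks A 0 0 D = 1 := by
  simp [fromBlocks_transpose, fromBlocks_multiply, hA, hD, fromBlocks_one]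

lemma sum_elim_mulVec_eq_fromBlocks_mulVec [NonUnitalNonAssocSemiring R] [Fintype n₁]
    [Fintype n₂] (A : Matrix m₁ n₁ R) (D : Matrix m₂ n₂ R) (x : n₁ → R) (y : n₂ → R) :
    Sum.elim (A *ᵥ x) (D *ᵥ y) = fromBlocks A 0 0 D *ᵥ Sum.elim x y := by
  simp [fromBlocks_mulVec, Function.comp_def]

lemma fromRows_mul_eq_fromBlocks_mul_fromRows [Semiring R] [Fintype n₁] [Fintype n₂]
    {p : Type*} (A : Matrix m₁ n₁ R) (D : Matrix m₂ n₂ R) (F₁ : Matrix n₁ p R)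
    (F₂ : Matrix n₂ p R) :
    fromRows (A * F₁) (D * F₂) = fromBlocks A 0 0 D * fromRows F₁ F₂ := by
  simp [fromBlocks_mul_fromRows]

end BlockDiagonal

lemma sub_mulVec_transpose_mulVec_of_isometry {R : Type*} [CommRing R] {m n p : Type*}
    [Fintype m] [Fintype n] [Fintype p] [DecidableEq n] {B : Matrix m n R} (hB : Bᵀ * B = 1)
    (Q : Matrix n p R) (x : n → R) :
    B *ᵥ x - (B * Q) *ᵥ ((B * Q)ᵀ *ᵥ (B *ᵥ x)) = B *ᵥ ((1 - Q * Qᵀ) *ᵥ x) := by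
  have hcancel : (B * Q)ᵀ * B = Qᵀ := by
    rw [transpose_mul, Matrix.mul_assoc, hB, Matrix.mul_one]
  rw [mulVec_mulVec, mulVec_mulVec, Matrix.mul_assoc (B * Q), hcancel, ← sub_mulVec,
    mulVec_mulVec, Matrix.mul_sub, Matrix.mul_one, Matrix.mul_assoc]

theorem coarsening_error_identity_general {n₁ n₂ k k' : ℕ}
    (Q₁ : Matrix (Fin n₁) (Fin k) ℝ) (Q₂ : Matrix (Fin n₂) (Fin k) ℝ)
    (F₁ F₂ : Matrix (Fin k) (Fin k) ℝ)
    (Phat : Matrix (Fin k ⊕ Fin k) (Fin k') ℝ)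
    (hQ₁ : Q₁ᵀ * Q₁ = 1) (hQ₂ : Q₂ᵀ * Q₂ = 1)
    (hPhat : Phatᵀ * Phat = 1)
    (hcomplete : Matrix.fromRows F₁ F₂ * (Matrix.fromRows F₁ F₂)ᵀ + Phat * Phatᵀ = 1)
    (xh1 xh2 : Fin k → ℝ) :
    vecEnorm (Sum.elim (Q₁.mulVec xh1) (Q₂.mulVec xh2)
        - (Matrix.fromRows (Q₁ * F₁) (Q₂ * F₂)).mulVec
            ((Matrix.fromRows (Q₁ * F₁) (Q₂ * F₂))ᵀ.mulVec
              (Sum.elim (Q₁.mulVec xh1) (Q₂.mulVec xh2))))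
      = vecEnorm (Phatᵀ.mulVec (Sum.elim xh1 xh2)) := by
  have hB := fromBlocks_transpose_mul_self_eq_one hQ₁ hQ₂
  have hPP : 1 - fromRows F₁ F₂ * (fromRows F₁ F₂)ᵀ = Phat * Phatᵀ :=
    (eq_sub_of_add_eq' hcomplete).symm
  rw [sum_elim_mulVec_eq_fromBlocks_mulVec, fromRows_mul_eq_fromBlocks_mul_fromRows,
    sub_mulVec_transpose_mulVec_of_isometry hB, hPP, ← mulVec_mulVec,
    vecEnorm_mulVec_of_transpose_mul_self_eq_one hB,
    vecEnorm_mulVec_of_transpose_mul_self_eq_one hPhat]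

theorem coarsening_error_identity {n₁ n₂ k k' : ℕ}
    (Q₁ : Matrix (Fin n₁) (Fin k) ℝ) (Q₂ : Matrix (Fin n₂) (Fin k) ℝ)
    (F₁ F₂ : Matrix (Fin k) (Fin k) ℝ)
    (Phat : Matrix (Fin k ⊕ Fin k) (Fin k') ℝ)
    (hQ₁ : Q₁ᵀ * Q₁ = 1) (hQ₂ : Q₂ᵀ * Q₂ = 1)
    (hQ : (Matrix.fromRows (Q₁ * F₁) (Q₂ * F₂))ᵀ * Matrix.fromRows (Q₁ * F₁) (Q₂ * F₂) = 1)
    (hPhat : Phatᵀ * Phat = 1)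
    (hperp : Phatᵀ * Matrix.fromRows F₁ F₂ = 0)
    (hcomplete : Matrix.fromRows F₁ F₂ * (Matrix.fromRows F₁ F₂)ᵀ + Phat * Phatᵀ = 1)
    (xh1 xh2 : Fin k → ℝ) :
    vecEnorm (Sum.elim (Q₁.mulVec xh1) (Q₂.mulVec xh2)
        - (Matrix.fromRows (Q₁ * F₁) (Q₂ * F₂)).mulVec
            ((Matrix.fromRows (Q₁ * F₁) (Q₂ * F₂))ᵀ.mulVec
              (Sum.elim (Q₁.mulVec xh1) (Q₂.mulVec xh2))))
      = vecEnorm (Phatᵀ.mulVec (Sum.elim xh1 xh2)) :=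
  coarsening_error_identity_general Q₁ Q₂ F₁ F₂ Phat hQ₁ hQ₂ hPhat hcomplete xh1 xh2
end

section
/- (Projection error recursion for non-leaf clusters) Let t have sons t₁, t₂; let V_t = [V_{t₁}E_{t₁}; V_{t₂}E_{t₂}] and Q_t = diag(Q_{t₁}, Q_{t₂}) Q̂_t with Q̂_t = [F_{t₁}; F_{t₂}], where Q_{t₁}, Q_{t₂}, Q_t are isometric. Suppose V_{t_j} − Q_{t_j} Q_{t_j}* V_{t_j} = P_{t_j} Z_{t_j} with P_{t_j} isometric and P_{t_j}* Q_{t_j} = 0 for j = 1,2, and let P̃_t be isometric with P̃_t* Q̂_t = 0 and Q̂_t Q̂_t* + P̃_t P̃_t* = I. Set V̂_t = [Q_{t₁}* V_{t₁} E_{t₁}; Q_{t₂}* V_{t₂} E_{t₂}]. Then V_t − Q_t Q_t* V_t = [P_{t₁} Z_{t₁} E_{t₁}; P_{t₂} Z_{t₂} E_{t₂}] + diag(Q_{t₁}, Q_{t₂}) P̃_t P̃_t* V̂_t. -/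
/-! Write `D = diag(Q₁, Q₂)` and `Q̂ = [F₁; F₂]`, so that `Q_t = D Q̂`. Completeness of `[Q̂, P̃]`
turns the father projector into `D Dᵀ - D P̃ P̃ᵀ Dᵀ`. Since `D` is block diagonal, `V_t - D Dᵀ V_t`
is the stack of the sons' projection errors multiplied by `E₁` and `E₂`, and `Dᵀ V_t = V̂_t`. -/

open Matrix

namespace Matrix

variable {R : Type*} {l m m₁ m₂ n n₁ n₂ p q : Type*}

theorem fromRows_sub [Sub R] (A₁ B₁ : Matrix m₁ n R) (A₂ B₂ : Matrix m₂ n R) :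
    fromRows A₁ A₂ - fromRows B₁ B₂ = fromRows (A₁ - B₁) (A₂ - B₂) := by
  ext (_ | _) _ <;> rfl

theorem fromBlocks_zero_zero_mul_fromRows [Semiring R] [Fintype n₁] [Fintype n₂]
    (A₁ : Matrix m₁ n₁ R) (A₂ : Matrix m₂ n₂ R) (X₁ : Matrix n₁ n R) (X₂ : Matrix n₂ n R) :
    fromBlocks A₁ 0 0 A₂ * fromRows X₁ X₂ = fromRows (A₁ * X₁) (A₂ * X₂) := by
  simp [fromBlocks_mul_fromRows]

theorem sub_mul_mul_transpose_mul_of_mul_transpose_add_eq_one [CommRing R]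
    [Fintype m] [Fintype n] [Fintype p] [Fintype q] [DecidableEq p]
    (D : Matrix m p R) (F : Matrix p n R) (P : Matrix p q R) (V : Matrix m l R)
    (hcomplete : F * Fᵀ + P * Pᵀ = 1) :
    V - D * F * (D * F)ᵀ * V = (V - D * (Dᵀ * V)) + D * P * Pᵀ * (Dᵀ * V) := by
  have hFF : F * Fᵀ = 1 - P * Pᵀ := eq_sub_of_add_eq hcomplete
  calc V - D * F * (D * F)ᵀ * V = V - D * (F * Fᵀ) * (Dᵀ * V) := by
        simp only [transpose_mul, Matrix.mul_assoc]
    _ = (V - D * (Dᵀ * V)) + D * P * Pᵀ * (Dᵀ * V) := by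
        simp only [hFF, Matrix.mul_sub, Matrix.sub_mul, Matrix.mul_one, Matrix.mul_assoc]
        abel

end Matrix

theorem projection_error_recursion_nonleaf_general {n₁ n₂ k k₁' k₂' k' : ℕ}
    (V₁ : Matrix (Fin n₁) (Fin k) ℝ) (V₂ : Matrix (Fin n₂) (Fin k) ℝ)
    (Q₁ : Matrix (Fin n₁) (Fin k) ℝ) (Q₂ : Matrix (Fin n₂) (Fin k) ℝ)
    (E₁ E₂ F₁ F₂ : Matrix (Fin k) (Fin k) ℝ)
    (P₁ : Matrix (Fin n₁) (Fin k₁') ℝ) (P₂ : Matrix (Fin n₂) (Fin k₂') ℝ)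
    (Z₁ : Matrix (Fin k₁') (Fin k) ℝ) (Z₂ : Matrix (Fin k₂') (Fin k) ℝ)
    (Ptil : Matrix (Fin k ⊕ Fin k) (Fin k') ℝ)
    -- projection error representations in the sons
    (hPZ₁ : V₁ - Q₁ * Q₁ᵀ * V₁ = P₁ * Z₁)
    (hPZ₂ : V₂ - Q₂ * Q₂ᵀ * V₂ = P₂ * Z₂)
    -- P̃ₜ extends Q̂ₜ = [F₁; F₂] to an orthonormal basis of R^{2k}
    (hcomplete : Matrix.fromRows F₁ F₂ * (Matrix.fromRows F₁ F₂)ᵀ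
        + Ptil * Ptilᵀ = 1) :
    Matrix.fromRows (V₁ * E₁) (V₂ * E₂)
        - (Matrix.fromBlocks Q₁ 0 0 Q₂ * Matrix.fromRows F₁ F₂)
          * (Matrix.fromBlocks Q₁ 0 0 Q₂ * Matrix.fromRows F₁ F₂)ᵀ
          * Matrix.fromRows (V₁ * E₁) (V₂ * E₂)
      = Matrix.fromRows (P₁ * Z₁ * E₁) (P₂ * Z₂ * E₂)
        + Matrix.fromBlocks Q₁ 0 0 Q₂ * Ptil * Ptilᵀ
          * Matrix.fromRows (Q₁ᵀ * V₁ * E₁) (Q₂ᵀ * V₂ * E₂) := by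
  rw [sub_mul_mul_transpose_mul_of_mul_transpose_add_eq_one _ _ _ _ hcomplete,
    fromBlocks_transpose, transpose_zero, transpose_zero, fromBlocks_zero_zero_mul_fromRows,
    fromBlocks_zero_zero_mul_fromRows, fromRows_sub, ← hPZ₁, ← hPZ₂]
  simp only [Matrix.sub_mul, Matrix.mul_assoc]

theorem projection_error_recursion_nonleaf {n₁ n₂ k k₁' k₂' k' : ℕ}
    (V₁ : Matrix (Fin n₁) (Fin k) ℝ) (V₂ : Matrix (Fin n₂) (Fin k) ℝ)
    (Q₁ : Matrix (Fin n₁) (Fin k) ℝ) (Q₂ : Matrix (Fin n₂) (Fin k) ℝ)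
    (E₁ E₂ F₁ F₂ : Matrix (Fin k) (Fin k) ℝ)
    (P₁ : Matrix (Fin n₁) (Fin k₁') ℝ) (P₂ : Matrix (Fin n₂) (Fin k₂') ℝ)
    (Z₁ : Matrix (Fin k₁') (Fin k) ℝ) (Z₂ : Matrix (Fin k₂') (Fin k) ℝ)
    (Ptil : Matrix (Fin k ⊕ Fin k) (Fin k') ℝ)
    (hQ₁ : Q₁ᵀ * Q₁ = 1) (hQ₂ : Q₂ᵀ * Q₂ = 1)
    -- the father basis matrix Q_t = diag(Q₁,Q₂) · [F₁; F₂] is isometric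
    (hQt : (Matrix.fromBlocks Q₁ 0 0 Q₂ * Matrix.fromRows F₁ F₂)ᵀ
            * (Matrix.fromBlocks Q₁ 0 0 Q₂ * Matrix.fromRows F₁ F₂) = 1)
    -- projection error representations in the sons
    (hP₁iso : P₁ᵀ * P₁ = 1) (hP₂iso : P₂ᵀ * P₂ = 1)
    (hP₁perp : P₁ᵀ * Q₁ = 0) (hP₂perp : P₂ᵀ * Q₂ = 0)
    (hPZ₁ : V₁ - Q₁ * Q₁ᵀ * V₁ = P₁ * Z₁)
    (hPZ₂ : V₂ - Q₂ * Q₂ᵀ * V₂ = P₂ * Z₂)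
    -- P̃ₜ extends Q̂ₜ = [F₁; F₂] to an orthonormal basis of R^{2k}
    (hPtil : Ptilᵀ * Ptil = 1)
    (hPtilPerp : Ptilᵀ * Matrix.fromRows F₁ F₂ = 0)
    (hcomplete : Matrix.fromRows F₁ F₂ * (Matrix.fromRows F₁ F₂)ᵀ
        + Ptil * Ptilᵀ = 1) :
    Matrix.fromRows (V₁ * E₁) (V₂ * E₂)
        - (Matrix.fromBlocks Q₁ 0 0 Q₂ * Matrix.fromRows F₁ F₂)
          * (Matrix.fromBlocks Q₁ 0 0 Q₂ * Matrix.fromRows F₁ F₂)ᵀ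
          * Matrix.fromRows (V₁ * E₁) (V₂ * E₂)
      = Matrix.fromRows (P₁ * Z₁ * E₁) (P₂ * Z₂ * E₂)
        + Matrix.fromBlocks Q₁ 0 0 Q₂ * Ptil * Ptilᵀ
          * Matrix.fromRows (Q₁ᵀ * V₁ * E₁) (Q₂ᵀ * V₂ * E₂) :=
  projection_error_recursion_nonleaf_general V₁ V₂ Q₁ Q₂ E₁ E₂ F₁ F₂ P₁ P₂ Z₁ Z₂ Ptil hPZ₁ hPZ₂
    hcomplete
end
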